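/- arXiv:2007.04050 — 6 statements merged into one kernel-verified Lean document; each statement's English description precedes it below -/
import Mathlib

section
/- Let k ≥ 1 and let Σ00, Ω00, Σθθ, Ωθθ be symmetric positive definite real k×k matrices, and let Σ0θ, Ω0θ be real k×k matrices satisfying (i) Ω00⁻¹ * Ω0θ = Σ00⁻¹ * Σ0θ and (ii) Ωθθ⁻¹ * Ω0θᵀ = Σθθ⁻¹ * Σ0θᵀ. Define B̃ = Σ00^{-1/2} * Ω00 * Σ00^{-1/2} and D = Σ00^{-1/2} * Σ0θ * Σθθ⁻¹ * Σ0θᵀ * Σ00^{-1/2}, where Σ00^{1/2} denotes the positive definite square root of Σ00. Then D * B̃ = B̃ * D. -/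
/-!
With `A = Σ0θ Σθθ⁻¹ Σ0θᵀ`, conjugating by `Σ00^{-1/2}` turns `D B̃ = B̃ D` into
`A Σ00⁻¹ Ω00 = Ω00 Σ00⁻¹ A`. Condition (i) says `Ω0θ = Ω00 Σ00⁻¹ Σ0θ`, and condition (ii),
transposed, says `Ω0θ = Σ0θ Σθθ⁻¹ Ωθθ`. Transposing (i) and using (ii) gives
`Σ0θᵀ Σ00⁻¹ Ω00 = Ω0θᵀ = Ωθθ Σθθ⁻¹ Σ0θᵀ`, so both sides of the reduced identity equal
`Σ0θ Σθθ⁻¹ Ωθθ Σθθ⁻¹ Σ0θᵀ`.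
-/

open Matrix

namespace Matrix.PosSemidef

open scoped ComplexOrder

/-- The positive semidefinite square root of a positive semidefinite matrix
(restored with its Mathlib (Dec 2024) definition, removed since). -/
noncomputable def sqrt {n 𝕜 : Type*} [RCLike 𝕜] [Fintype n] [DecidableEq n]
    {A : Matrix n n 𝕜} (hA : PosSemidef A) : Matrix n n 𝕜 :=
  hA.1.eigenvectorUnitary.1 * diagonal ((↑) ∘ (√·) ∘ hA.1.eigenvalues) *
  (star hA.1.eigenvectorUnitary : Matrix n n 𝕜)

end Matrix.PosSemidef

namespace Matrix.PosSemidef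

open scoped ComplexOrder

variable {n 𝕜 : Type*} [RCLike 𝕜] [Fintype n] [DecidableEq n] {A : Matrix n n 𝕜}

theorem sqrt_mul_self (hA : A.PosSemidef) : hA.sqrt * hA.sqrt = A := by
  set U := hA.1.eigenvectorUnitary
  have hU : (star U : Matrix n n 𝕜) * (U : Matrix n n 𝕜) = 1 := Unitary.coe_star_mul_self U
  conv_rhs => rw [hA.1.spectral_theorem, Unitary.conjStarAlgAut_apply]
  simp only [sqrt, Matrix.mul_assoc]
  rw [← Matrix.mul_assoc (star U : Matrix n n 𝕜), hU, Matrix.one_mul,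
    ← Matrix.mul_assoc (diagonal _), diagonal_mul_diagonal]
  congr 3
  funext i
  simp only [Function.comp_apply, ← RCLike.ofReal_mul]
  rw [Real.mul_self_sqrt (hA.eigenvalues_nonneg i)]

end Matrix.PosSemidef

namespace Matrix

variable {n R : Type*} [Fintype n] [DecidableEq n] [CommRing R]

theorem commute_inv_conj_of_mul_self_eq {M S A B : Matrix n n R} (hM : M * M = S)
    (h : A * S⁻¹ * B = B * S⁻¹ * A) :
    (M⁻¹ * A * M⁻¹) * (M⁻¹ * B * M⁻¹) = (M⁻¹ * B * M⁻¹) * (M⁻¹ * A * M⁻¹) := by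
  have hMinv : M⁻¹ * M⁻¹ = S⁻¹ := by rw [← mul_inv_rev, hM]
  calc (M⁻¹ * A * M⁻¹) * (M⁻¹ * B * M⁻¹) = M⁻¹ * (A * (M⁻¹ * M⁻¹) * B) * M⁻¹ := by
        simp only [Matrix.mul_assoc]
    _ = M⁻¹ * (B * (M⁻¹ * M⁻¹) * A) * M⁻¹ := by rw [hMinv, h]
    _ = (M⁻¹ * B * M⁻¹) * (M⁻¹ * A * M⁻¹) := by simp only [Matrix.mul_assoc]

theorem transpose_eq_of_eq_mul_inv_mul {A B X Y : Matrix n n R} (hA : A.IsSymm)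
    (hB : B.IsSymm) (h : X = A * (B⁻¹ * Y)) : Xᵀ = Yᵀ * B⁻¹ * A := by
  rw [h, transpose_mul, transpose_mul, transpose_nonsing_inv, hA.eq, hB.eq, Matrix.mul_assoc]

theorem mul_inv_mul_comm_of_invariance {S00 O00 Stt Ott S0t O0t : Matrix n n R}
    (hS00 : S00.IsSymm) (hO00 : O00.IsSymm) (hStt : Stt.IsSymm) (hOtt : Ott.IsSymm)
    (hO00u : IsUnit O00) (hOttu : IsUnit Ott)
    (h1 : O00⁻¹ * O0t = S00⁻¹ * S0t) (h2 : Ott⁻¹ * O0tᵀ = Stt⁻¹ * S0tᵀ) :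
    S0t * Stt⁻¹ * S0tᵀ * S00⁻¹ * O00 = O00 * S00⁻¹ * (S0t * Stt⁻¹ * S0tᵀ) := by
  have := hO00u.invertible
  have := hOttu.invertible
  have hO0t := (inv_mul_eq_iff_eq_mul_of_invertible _ _ _).1 h1
  have hO0tT := (inv_mul_eq_iff_eq_mul_of_invertible _ _ _).1 h2
  have hO0tT' := transpose_eq_of_eq_mul_inv_mul hO00 hS00 hO0t
  have hO0t' : O0t = S0t * Stt⁻¹ * Ott := by
    simpa only [transpose_transpose] using transpose_eq_of_eq_mul_inv_mul hOtt hStt hO0tT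
  calc S0t * Stt⁻¹ * S0tᵀ * S00⁻¹ * O00 = S0t * Stt⁻¹ * (S0tᵀ * S00⁻¹ * O00) := by
        simp only [Matrix.mul_assoc]
    _ = S0t * Stt⁻¹ * Ott * (Stt⁻¹ * S0tᵀ) := by
        rw [← hO0tT', hO0tT]; simp only [Matrix.mul_assoc]
    _ = O00 * S00⁻¹ * (S0t * Stt⁻¹ * S0tᵀ) := by
        rw [← hO0t', hO0t]; simp only [Matrix.mul_assoc]

end Matrix

theorem stmt_0_general (k : ℕ)
    (S00 O00 Stt Ott : Matrix (Fin k) (Fin k) ℝ)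
    (hS00 : S00.PosDef) (hO00 : O00.PosDef) (hStt : Stt.PosDef) (hOtt : Ott.PosDef)
    (S0t O0t : Matrix (Fin k) (Fin k) ℝ)
    (h1 : O00⁻¹ * O0t = S00⁻¹ * S0t)
    (h2 : Ott⁻¹ * O0tᵀ = Stt⁻¹ * S0tᵀ) :
    ((hS00.posSemidef.sqrt)⁻¹ * S0t * Stt⁻¹ * S0tᵀ * (hS00.posSemidef.sqrt)⁻¹) *
      ((hS00.posSemidef.sqrt)⁻¹ * O00 * (hS00.posSemidef.sqrt)⁻¹)
    = ((hS00.posSemidef.sqrt)⁻¹ * O00 * (hS00.posSemidef.sqrt)⁻¹) *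
      ((hS00.posSemidef.sqrt)⁻¹ * S0t * Stt⁻¹ * S0tᵀ * (hS00.posSemidef.sqrt)⁻¹) := by
  have hcomm := mul_inv_mul_comm_of_invariance
    (isHermitian_iff_isSymm.1 hS00.isHermitian) (isHermitian_iff_isSymm.1 hO00.isHermitian)
    (isHermitian_iff_isSymm.1 hStt.isHermitian) (isHermitian_iff_isSymm.1 hOtt.isHermitian)
    hO00.isUnit hOtt.isUnit h1 h2
  simpa only [Matrix.mul_assoc] using
    commute_inv_conj_of_mul_self_eq hS00.posSemidef.sqrt_mul_self hcomm

/-- Key matrix computation in the proof of Theorem 3(b) of Andrews–Mikusheva: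
under the invariance conditions, `B̃ = Σ00^{-1/2} Ω00 Σ00^{-1/2}` commutes with
`D = Σ00^{-1/2} Σ0θ Σθθ⁻¹ Σ0θᵀ Σ00^{-1/2}`. -/
theorem stmt_0 (k : ℕ) (hk : 1 ≤ k)
    (S00 O00 Stt Ott : Matrix (Fin k) (Fin k) ℝ)
    (hS00 : S00.PosDef) (hO00 : O00.PosDef) (hStt : Stt.PosDef) (hOtt : Ott.PosDef)
    (S0t O0t : Matrix (Fin k) (Fin k) ℝ)
    (h1 : O00⁻¹ * O0t = S00⁻¹ * S0t)
    (h2 : Ott⁻¹ * O0tᵀ = Stt⁻¹ * S0tᵀ) :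
    ((hS00.posSemidef.sqrt)⁻¹ * S0t * Stt⁻¹ * S0tᵀ * (hS00.posSemidef.sqrt)⁻¹) *
      ((hS00.posSemidef.sqrt)⁻¹ * O00 * (hS00.posSemidef.sqrt)⁻¹)
    = ((hS00.posSemidef.sqrt)⁻¹ * O00 * (hS00.posSemidef.sqrt)⁻¹) *
      ((hS00.posSemidef.sqrt)⁻¹ * S0t * Stt⁻¹ * S0tᵀ * (hS00.posSemidef.sqrt)⁻¹) :=
  stmt_0_general k S00 O00 Stt Ott hS00 hO00 hStt hOtt S0t O0t h1 h2
end

section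
/- Let D, Θ, W, V be types with a distinguished θ̃ ∈ Θ and v0 ∈ V. Let ℓ : Θ → D → ℝ be everywhere strictly positive, and let ξ : D → W and H : Θ → D → V be arbitrary maps. Assume: (representation) there exists r̃ : Θ → Θ → W → V → V → ℝ such that ℓ(θ1, d) / ℓ(θ2, d) = r̃(θ1, θ2, ξ(d), H(θ1, d), H(θ2, d)) for all θ1, θ2 ∈ Θ and d ∈ D; and (richness) for all θ1, θ2 ∈ Θ and d ∈ D there exists d' ∈ D with ξ(d') = ξ(d), H(θ1, d') = H(θ1, d), H(θ2, d') = H(θ2, d), and H(θ̃, d') = v0. Then there exist a strictly positive function c : D → ℝ and a function r : Θ → W → V → ℝ such that ℓ(θ, d) = c(d) · r(θ, ξ(d), H(θ, d)) for all θ ∈ Θ and d ∈ D. -/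
/-- Core factorization claim in the 'only if' direction of the invariance theorem
(Appendix B of Andrews–Mikusheva): if every likelihood ratio `ℓ(θ1,d)/ℓ(θ2,d)` depends
on the data `d` only through `(ξ(d), H(θ1,d), H(θ2,d))`, and the data are rich enough,
then `ℓ(θ,d) = c(d)·r(θ, ξ(d), H(θ,d))` for a strictly positive scale `c`. -/
theorem stmt_4 {D Θ W V : Type*} (θt : Θ) (v0 : V)
    (ℓ : Θ → D → ℝ) (hpos : ∀ θ d, 0 < ℓ θ d)
    (ξ : D → W) (H : Θ → D → V)
    (hrep : ∃ rt : Θ → Θ → W → V → V → ℝ,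
      ∀ θ1 θ2 d, ℓ θ1 d / ℓ θ2 d = rt θ1 θ2 (ξ d) (H θ1 d) (H θ2 d))
    (hrich : ∀ θ1 θ2 d, ∃ d', ξ d' = ξ d ∧ H θ1 d' = H θ1 d ∧ H θ2 d' = H θ2 d ∧
      H θt d' = v0) :
    ∃ (c : D → ℝ) (r : Θ → W → V → ℝ), (∀ d, 0 < c d) ∧
      ∀ θ d, ℓ θ d = c d * r θ (ξ d) (H θ d) := by
  obtain ⟨rt, hrt⟩ := hrep
  refine ⟨fun d => ℓ θt d, fun θ w v => rt θ θt w v v0, fun d => hpos θt d, ?_⟩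
  intro θ d
  have hv : H θt d = v0 := by
    obtain ⟨d', -, -, h2, h3⟩ := hrich θ θt d
    rw [← h2, h3]
  have := hrt θ θt d
  rw [hv] at this
  simp only []
  show ℓ θ d = ℓ θt d * rt θ θt (ξ d) (H θ d) v0
  rw [← this]
  rw [mul_comm, div_mul_cancel₀ _ (hpos θt d).ne']
end

section
/- Let k ≥ 1, let Σ and C be symmetric positive definite real k×k matrices, let ψ be an invertible real k×k matrix, and let g, w ∈ ℝ^k. For λ > 0 define u(λ) = (λ/(1+λ))·ψ⁻¹g + (1/(1+λ))·w and Λ(λ) = (λ/(1+λ))·ψ⁻¹ Σ (ψ⁻¹)ᵀ + (1/(1+λ))·C. Then, as λ → ∞, det(Λ(λ))^{-1/2} · exp(−(1/2)·u(λ)ᵀ Λ(λ)⁻¹ u(λ)) converges to |det ψ| · (det Σ)^{-1/2} · exp(−(1/2)·gᵀ Σ⁻¹ g). -/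
open Matrix Filter Topology

/-!
The map `(S, x) ↦ det S ^ (-1/2) * exp (-½ xᵀS⁻¹x)` is continuous wherever `det S ≠ 0`, and
`(Λ λ, u λ)` converges to `(ψ⁻¹ Σ ψ⁻ᵀ, ψ⁻¹ g)`, whose determinant `det Σ / (det ψ)²` is nonzero.
So the limit is the value of that map at `(ψ⁻¹ Σ ψ⁻ᵀ, ψ⁻¹ g)`, and the change of variables
`x = ψ⁻¹ g` turns it into `|det ψ| * det Σ ^ (-1/2) * exp (-½ gᵀΣ⁻¹g)`.
-/

noncomputable def gaussianLikelihood {n : Type*} [Fintype n] [DecidableEq n]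
    (S : Matrix n n ℝ) (x : n → ℝ) : ℝ :=
  S.det ^ (-(1 / 2) : ℝ) * Real.exp (-(1 / 2) * (x ⬝ᵥ S⁻¹ *ᵥ x))

theorem tendsto_one_div_one_add_atTop_nhds_zero :
    Tendsto (fun l : ℝ => 1 / (1 + l)) atTop (𝓝 0) := by
  simpa only [one_div, Function.comp_def, id] using
    tendsto_inv_atTop_zero.comp (tendsto_atTop_add_const_left atTop 1 tendsto_id)

theorem tendsto_div_one_add_atTop_nhds_one :
    Tendsto (fun l : ℝ => l / (1 + l)) atTop (𝓝 1) := by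
  have h := (tendsto_const_nhds (x := (1 : ℝ))).sub tendsto_one_div_one_add_atTop_nhds_zero
  rw [sub_zero] at h
  refine h.congr' ?_
  filter_upwards [eventually_gt_atTop 0] with l hl
  field_simp
  ring

theorem tendsto_div_one_add_smul_add_one_div_one_add_smul {E : Type*} [AddCommGroup E]
    [Module ℝ E] [TopologicalSpace E] [ContinuousAdd E] [ContinuousSMul ℝ E] (a b : E) :
    Tendsto (fun l : ℝ => (l / (1 + l)) • a + (1 / (1 + l)) • b) atTop (𝓝 a) := by
  have h := (tendsto_div_one_add_atTop_nhds_one.smul_const a).add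
    (tendsto_one_div_one_add_atTop_nhds_zero.smul_const b)
  rwa [one_smul, zero_smul, add_zero] at h

theorem rpow_neg_half_div_sq {s : ℝ} (hs : 0 ≤ s) (d : ℝ) :
    (s / d ^ 2) ^ (-(1 / 2) : ℝ) = |d| * s ^ (-(1 / 2) : ℝ) := by
  rcases eq_or_ne d 0 with rfl | hd
  · simp
  have habs : 0 < |d| := abs_pos.mpr hd
  have hsq : (d ^ 2)⁻¹ ^ (-(1 / 2) : ℝ) = |d| := by
    rw [← sq_abs, ← Real.rpow_natCast, ← Real.rpow_neg habs.le, ← Real.rpow_mul habs.le]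
    norm_num
  rw [div_eq_mul_inv, Real.mul_rpow hs (by positivity), hsq, mul_comm]

section GaussianLikelihood

variable {n : Type*} [Fintype n] [DecidableEq n]

theorem continuousAt_gaussianLikelihood {S : Matrix n n ℝ} (x : n → ℝ) (hS : S.det ≠ 0) :
    ContinuousAt (fun p : Matrix n n ℝ × (n → ℝ) => gaussianLikelihood p.1 p.2) (S, x) := by
  have hinv : ContinuousAt (Inv.inv : Matrix n n ℝ → Matrix n n ℝ) S :=
    continuousAt_matrix_inv S <| by simpa only [Ring.inverse_eq_inv'] using continuousAt_inv₀ hS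
  have hquad : ContinuousAt (fun p : Matrix n n ℝ × (n → ℝ) => p.2 ⬝ᵥ p.1⁻¹ *ᵥ p.2) (S, x) :=
    (continuous_snd.dotProduct (continuous_fst.matrix_mulVec continuous_snd)).continuousAt.comp
      (f := fun p : Matrix n n ℝ × (n → ℝ) => (p.1⁻¹, p.2))
      ((hinv.comp continuousAt_fst).prodMk continuousAt_snd)
  exact (continuous_fst.matrix_det.continuousAt.rpow_const (Or.inl hS)).mul
    (Real.continuous_exp.continuousAt.comp (continuousAt_const.mul hquad))

theorem det_inv_mul_mul_inv_transpose (ψ S : Matrix n n ℝ) :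
    (ψ⁻¹ * S * ψ⁻¹ᵀ).det = S.det / ψ.det ^ 2 := by
  rw [det_mul, det_mul, det_transpose, det_nonsing_inv, Ring.inverse_eq_inv']
  ring

variable {ψ : Matrix n n ℝ}

theorem dotProduct_inv_mul_mul_inv_transpose_mulVec (hψ : IsUnit ψ.det) (S : Matrix n n ℝ)
    (g : n → ℝ) :
    ψ⁻¹ *ᵥ g ⬝ᵥ (ψ⁻¹ * S * ψ⁻¹ᵀ)⁻¹ *ᵥ (ψ⁻¹ *ᵥ g) = g ⬝ᵥ S⁻¹ *ᵥ g := by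
  have hψg : ψ *ᵥ (ψ⁻¹ *ᵥ g) = g := by
    rw [mulVec_mulVec, mul_nonsing_inv _ hψ, one_mulVec]
  have hψT : IsUnit ψᵀ.det := by rwa [det_transpose]
  rw [Matrix.mul_inv_rev, Matrix.mul_inv_rev, transpose_nonsing_inv,
    nonsing_inv_nonsing_inv _ hψT, nonsing_inv_nonsing_inv _ hψ, ← mulVec_mulVec,
    ← mulVec_mulVec, hψg, dotProduct_mulVec, vecMul_transpose, hψg]

theorem gaussianLikelihood_inv_mul_mul_inv_transpose (hψ : IsUnit ψ.det) {S : Matrix n n ℝ}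
    (hS : 0 ≤ S.det) (g : n → ℝ) :
    gaussianLikelihood (ψ⁻¹ * S * ψ⁻¹ᵀ) (ψ⁻¹ *ᵥ g) = |ψ.det| * gaussianLikelihood S g := by
  rw [gaussianLikelihood, gaussianLikelihood, det_inv_mul_mul_inv_transpose,
    rpow_neg_half_div_sq hS, dotProduct_inv_mul_mul_inv_transpose_mulVec hψ, mul_assoc]

end GaussianLikelihood

theorem stmt_5_general (k : ℕ)
    (Sg C : Matrix (Fin k) (Fin k) ℝ) (hSg : Sg.PosDef)
    (ψ : Matrix (Fin k) (Fin k) ℝ) (hψ : IsUnit ψ.det)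
    (g w : Fin k → ℝ)
    (u : ℝ → Fin k → ℝ) (Λ : ℝ → Matrix (Fin k) (Fin k) ℝ)
    (hu : ∀ l, u l = (l / (1 + l)) • ψ⁻¹.mulVec g + (1 / (1 + l)) • w)
    (hΛ : ∀ l, Λ l = (l / (1 + l)) • (ψ⁻¹ * Sg * ψ⁻¹ᵀ) + (1 / (1 + l)) • C) :
    Tendsto (fun l : ℝ =>
        (Λ l).det ^ (-(1 / 2) : ℝ) *
          Real.exp (-(1 / 2) * (u l ⬝ᵥ (Λ l)⁻¹.mulVec (u l))))
      atTop
      (nhds (|ψ.det| * Sg.det ^ (-(1 / 2) : ℝ) *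
        Real.exp (-(1 / 2) * (g ⬝ᵥ Sg⁻¹.mulVec g)))) := by
  have hΛu : Tendsto (fun l => (Λ l, u l)) atTop (𝓝 (ψ⁻¹ * Sg * ψ⁻¹ᵀ, ψ⁻¹ *ᵥ g)) := by
    rw [funext hΛ, funext hu]
    exact (tendsto_div_one_add_smul_add_one_div_one_add_smul _ C).prodMk_nhds
      (tendsto_div_one_add_smul_add_one_div_one_add_smul _ w)
  have hdet : (ψ⁻¹ * Sg * ψ⁻¹ᵀ).det ≠ 0 := by
    rw [det_inv_mul_mul_inv_transpose]
    exact div_ne_zero hSg.det_pos.ne' (pow_ne_zero 2 hψ.ne_zero)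
  have hlim := (continuousAt_gaussianLikelihood (ψ⁻¹ *ᵥ g) hdet).tendsto.comp hΛu
  rwa [gaussianLikelihood_inv_mul_mul_inv_transpose hψ hSg.det_pos.le, gaussianLikelihood,
    ← mul_assoc] at hlim

/-- Equation (8) of Andrews–Mikusheva: the proportional-prior integrated likelihood
converges, as `λ → ∞`, to the continuously-updating quasi-likelihood
`|det ψ|·(det Σ)^{-1/2}·exp(−½ gᵀΣ⁻¹g)`. -/
theorem stmt_5 (k : ℕ) (hk : 1 ≤ k)
    (Sg C : Matrix (Fin k) (Fin k) ℝ) (hSg : Sg.PosDef) (hC : C.PosDef)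
    (ψ : Matrix (Fin k) (Fin k) ℝ) (hψ : IsUnit ψ.det)
    (g w : Fin k → ℝ)
    (u : ℝ → Fin k → ℝ) (Λ : ℝ → Matrix (Fin k) (Fin k) ℝ)
    (hu : ∀ l, u l = (l / (1 + l)) • ψ⁻¹.mulVec g + (1 / (1 + l)) • w)
    (hΛ : ∀ l, Λ l = (l / (1 + l)) • (ψ⁻¹ * Sg * ψ⁻¹ᵀ) + (1 / (1 + l)) • C) :
    Tendsto (fun l : ℝ =>
        (Λ l).det ^ (-(1 / 2) : ℝ) *
          Real.exp (-(1 / 2) * (u l ⬝ᵥ (Λ l)⁻¹.mulVec (u l))))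
      atTop
      (nhds (|ψ.det| * Sg.det ^ (-(1 / 2) : ℝ) *
        Real.exp (-(1 / 2) * (g ⬝ᵥ Sg⁻¹.mulVec g)))) :=
  stmt_5_general k Sg C hSg ψ hψ g w u Λ hu hΛ
end

section
/- Let Θ0 be a compact topological space and k ≥ 1. Let Σ : Θ0 → (real k×k matrices) be continuous with Σ(θ) symmetric positive definite for every θ, let ψ : Θ0 → (real k×k matrices) be continuous with ψ(θ) invertible for every θ, let C be a symmetric positive definite real k×k matrix, let g : Θ0 → ℝ^k be continuous, and let w ∈ ℝ^k. For λ > 0 define ℓ_λ(θ) = det(Λ_λ(θ))^{-1/2} · exp(−(1/2)·u_λ(θ)ᵀ Λ_λ(θ)⁻¹ u_λ(θ)), where u_λ(θ) = (λ/(1+λ))·ψ(θ)⁻¹ g(θ) + (1/(1+λ))·w and Λ_λ(θ) = (λ/(1+λ))·ψ(θ)⁻¹ Σ(θ) (ψ(θ)⁻¹)ᵀ + (1/(1+λ))·C, and define ℓ_∞(θ) = |det ψ(θ)| · (det Σ(θ))^{-1/2} · exp(−(1/2)·g(θ)ᵀ Σ(θ)⁻¹ g(θ)). Then ℓ_λ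 converges to ℓ_∞ uniformly on Θ0 as λ → ∞. -/
/-!
With `t = 1 / (1 + λ)` the likelihood `ℓ_λ(θ)` is the Gaussian kernel
`det M ^ (-1/2) * exp (-(1/2) vᵀ M⁻¹ v)` evaluated at `M = (1 - t) ψ⁻¹ Σ ψ⁻ᵀ + t C` and
`v = (1 - t) ψ⁻¹ g + t w`. For `t ∈ [0, 1]` the matrix `M` is positive definite, so the kernel is
jointly continuous on `[0, 1] × Θ0`; since `Θ0` is compact, the convergence as `t → 0` is uniform
in `θ`. At `t = 0` the change of variables `ψ⁻¹` turns the kernel into `|det ψ|` times the kernel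
of `(Σ, g)`, which is `ℓ_∞`.
-/

open Matrix Filter Topology Set

theorem tendstoUniformly_nhdsWithin_of_continuousOn {α β γ : Type*} [TopologicalSpace α]
    [TopologicalSpace β] [CompactSpace β] [UniformSpace γ] {F : α → β → γ} {s : Set α} {x : α}
    (hF : ContinuousOn (Function.uncurry F) (s ×ˢ univ)) (hx : x ∈ s) :
    TendstoUniformly F (F x) (𝓝[s] x) := by
  intro u hu
  obtain ⟨v, hv, hvu⟩ := isCompact_univ.mem_uniformity_of_prod hF hx (tendsto_swap_uniformity hu)
  filter_upwards [hv] with y hy b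
  exact hvu y hy b (mem_univ b)

theorem tendsto_one_div_one_add_atTop_nhdsWithin_Icc :
    Tendsto (fun l : ℝ => 1 / (1 + l)) atTop (𝓝[Icc 0 1] 0) := by
  refine tendsto_nhdsWithin_iff.2 ⟨?_, ?_⟩
  · simpa only [one_div, Function.comp_def, id] using
      tendsto_inv_atTop_zero.comp (tendsto_atTop_add_const_left atTop 1 tendsto_id)
  · filter_upwards [eventually_ge_atTop 0] with l hl
    exact ⟨by positivity, div_le_one_of_le₀ (by linarith) (by positivity)⟩

section GaussLik

variable {n : Type*}

theorem Matrix.PosDef.one_sub_smul_add_smul {A C : Matrix n n ℝ} (hA : A.PosDef) (hC : C.PosDef)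
    {t : ℝ} (ht : t ∈ Icc (0 : ℝ) 1) : ((1 - t) • A + t • C).PosDef := by
  rcases ht.2.lt_or_eq with ht1 | rfl
  · exact (hA.smul (sub_pos.2 ht1)).add_posSemidef (hC.posSemidef.smul ht.1)
  · simpa using hC

variable [Fintype n] [DecidableEq n]

theorem Matrix.continuousAt_inv_of_det_ne_zero {K : Type*} [Field K] [TopologicalSpace K]
    [IsTopologicalRing K] [ContinuousInv₀ K] {M : Matrix n n K} (hM : M.det ≠ 0) :
    ContinuousAt Inv.inv M :=
  continuousAt_matrix_inv M (by simpa only [Ring.inverse_eq_inv'] using continuousAt_inv₀ hM)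

theorem Matrix.PosDef.mul_mul_transpose_of_isUnit_det {S B : Matrix n n ℝ} (hS : S.PosDef)
    (hB : IsUnit B.det) : (B * S * Bᵀ).PosDef := by
  simpa [conjTranspose_eq_transpose_of_trivial] using
    hS.mul_mul_conjTranspose_same (vecMul_injective_of_isUnit ((isUnit_iff_isUnit_det B).2 hB))

theorem Matrix.inv_mulVec_dotProduct_inv_congr {R : Type*} [CommRing R] {P : Matrix n n R}
    (hP : IsUnit P.det) (S : Matrix n n R) (v : n → R) :
    (P⁻¹ *ᵥ v) ⬝ᵥ (P⁻¹ * S * P⁻¹ᵀ)⁻¹ *ᵥ (P⁻¹ *ᵥ v) = v ⬝ᵥ S⁻¹ *ᵥ v := by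
  have hinv : (P⁻¹ * S * P⁻¹ᵀ)⁻¹ = Pᵀ * S⁻¹ * P := by
    rw [mul_inv_rev, mul_inv_rev, transpose_nonsing_inv,
      nonsing_inv_nonsing_inv _ (isUnit_det_transpose P hP), nonsing_inv_nonsing_inv _ hP,
      Matrix.mul_assoc]
  rw [hinv, mulVec_mulVec, Matrix.mul_assoc, Matrix.mul_assoc, mul_nonsing_inv _ hP,
    Matrix.mul_one, ← mulVec_mulVec, dotProduct_mulVec, vecMul_transpose, mulVec_mulVec,
    mul_nonsing_inv _ hP, one_mulVec]

theorem Matrix.det_inv_congr_rpow_neg_half {P S : Matrix n n ℝ} (hS : 0 ≤ S.det) :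
    (P⁻¹ * S * P⁻¹ᵀ).det ^ (-(1 / 2) : ℝ) = |P.det| * S.det ^ (-(1 / 2) : ℝ) := by
  have hdet : (P⁻¹ * S * P⁻¹ᵀ).det = |P.det⁻¹| ^ 2 * S.det := by
    rw [det_mul, det_mul, det_transpose, det_nonsing_inv, Ring.inverse_eq_inv', sq_abs]
    ring
  rw [hdet, Real.mul_rpow (by positivity) hS, ← Real.rpow_natCast,
    ← Real.rpow_mul (abs_nonneg _), abs_inv,
    show ((2 : ℕ) : ℝ) * (-(1 / 2)) = -1 by norm_num, Real.rpow_neg_one, inv_inv]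

-- The centred Gaussian density with covariance `M` at `v`, up to the factor `(2π)^(-k/2)`.
noncomputable def gaussLik (M : Matrix n n ℝ) (v : n → ℝ) : ℝ :=
  M.det ^ (-(1 / 2) : ℝ) * Real.exp (-(1 / 2) * (v ⬝ᵥ M⁻¹ *ᵥ v))

theorem gaussLik_inv_congr {P S : Matrix n n ℝ} (hP : IsUnit P.det) (hS : 0 ≤ S.det)
    (v : n → ℝ) : gaussLik (P⁻¹ * S * P⁻¹ᵀ) (P⁻¹ *ᵥ v) = |P.det| * gaussLik S v := by
  rw [gaussLik, gaussLik, det_inv_congr_rpow_neg_half hS, inv_mulVec_dotProduct_inv_congr hP,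
    mul_assoc]

theorem continuousAt_gaussLik {M : Matrix n n ℝ} (hM : M.PosDef) (v : n → ℝ) :
    ContinuousAt (fun p : Matrix n n ℝ × (n → ℝ) => gaussLik p.1 p.2) (M, v) := by
  have hdet : M.det ≠ 0 := hM.det_pos.ne'
  have hinv : ContinuousAt (fun p : Matrix n n ℝ × (n → ℝ) => p.1⁻¹) (M, v) :=
    (continuousAt_inv_of_det_ne_zero hdet).comp continuousAt_fst
  unfold gaussLik
  fun_prop (disch := first | assumption | exact Or.inl hdet)

variable {X : Type*} [TopologicalSpace X] [CompactSpace X] {A : X → Matrix n n ℝ}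
  {a : X → n → ℝ} {C : Matrix n n ℝ}

theorem tendstoUniformly_gaussLik_one_sub_smul_add_smul (hA : Continuous A)
    (hApd : ∀ x, (A x).PosDef) (ha : Continuous a) (hC : C.PosDef) (w : n → ℝ) :
    TendstoUniformly (fun (t : ℝ) x => gaussLik ((1 - t) • A x + t • C) ((1 - t) • a x + t • w))
      (fun x => gaussLik (A x) (a x)) (𝓝[Icc 0 1] 0) := by
  have hone_sub : Continuous fun p : ℝ × X => 1 - p.1 := continuous_const.sub continuous_fst
  have hcov : Continuous fun p : ℝ × X => (1 - p.1) • A p.2 + p.1 • C :=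
    (hone_sub.smul (hA.comp continuous_snd)).add (continuous_fst.smul continuous_const)
  have hmean : Continuous fun p : ℝ × X => (1 - p.1) • a p.2 + p.1 • w :=
    (hone_sub.smul (ha.comp continuous_snd)).add (continuous_fst.smul continuous_const)
  have hF : ContinuousOn (Function.uncurry fun (t : ℝ) x =>
      gaussLik ((1 - t) • A x + t • C) ((1 - t) • a x + t • w)) (Icc 0 1 ×ˢ univ) :=
    fun p hp => ((continuousAt_gaussLik ((hApd p.2).one_sub_smul_add_smul hC hp.1) _).comp_of_eq
      (hcov.prodMk hmean).continuousAt rfl).continuousWithinAt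
  simpa using tendstoUniformly_nhdsWithin_of_continuousOn hF (left_mem_Icc.2 zero_le_one)

theorem tendstoUniformly_gaussLik_atTop (hA : Continuous A) (hApd : ∀ x, (A x).PosDef)
    (ha : Continuous a) (hC : C.PosDef) (w : n → ℝ) :
    TendstoUniformly
      (fun (l : ℝ) x => gaussLik ((l / (1 + l)) • A x + (1 / (1 + l)) • C)
        ((l / (1 + l)) • a x + (1 / (1 + l)) • w))
      (fun x => gaussLik (A x) (a x)) atTop := by
  have hweight : ∀ᶠ l : ℝ in atTop, 1 - 1 / (1 + l) = l / (1 + l) := by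
    filter_upwards [eventually_ge_atTop 0] with l hl
    field_simp
    ring
  refine (tendstoUniformly_congr ?_).1 fun u hu =>
    tendsto_one_div_one_add_atTop_nhdsWithin_Icc.eventually
      (tendstoUniformly_gaussLik_one_sub_smul_add_smul hA hApd ha hC w u hu)
  filter_upwards [hweight] with l hl
  simp only [hl]

end GaussLik

theorem stmt_6_general {Θ0 : Type*} [TopologicalSpace Θ0] [CompactSpace Θ0]
    (k : ℕ)
    (Sg : Θ0 → Matrix (Fin k) (Fin k) ℝ) (hSgc : Continuous Sg)
    (hSgPD : ∀ θ, (Sg θ).PosDef)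
    (ψ : Θ0 → Matrix (Fin k) (Fin k) ℝ) (hψc : Continuous ψ)
    (hψinv : ∀ θ, IsUnit (ψ θ).det)
    (C : Matrix (Fin k) (Fin k) ℝ) (hC : C.PosDef)
    (g : Θ0 → Fin k → ℝ) (hgc : Continuous g) (w : Fin k → ℝ)
    (u : ℝ → Θ0 → Fin k → ℝ) (Λ : ℝ → Θ0 → Matrix (Fin k) (Fin k) ℝ)
    (hu : ∀ l θ, u l θ = (l / (1 + l)) • (ψ θ)⁻¹.mulVec (g θ) + (1 / (1 + l)) • w)
    (hΛ : ∀ l θ, Λ l θ = (l / (1 + l)) • ((ψ θ)⁻¹ * Sg θ * ((ψ θ)⁻¹)ᵀ) + (1 / (1 + l)) • C) :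
    TendstoUniformly
      (fun (l : ℝ) (θ : Θ0) =>
        (Λ l θ).det ^ (-(1 / 2) : ℝ) *
          Real.exp (-(1 / 2) * (u l θ ⬝ᵥ (Λ l θ)⁻¹.mulVec (u l θ))))
      (fun θ : Θ0 =>
        |(ψ θ).det| * (Sg θ).det ^ (-(1 / 2) : ℝ) *
          Real.exp (-(1 / 2) * (g θ ⬝ᵥ (Sg θ)⁻¹.mulVec (g θ))))
      atTop := by
  have hψinv_cont : Continuous fun θ => (ψ θ)⁻¹ := continuous_iff_continuousAt.2 fun θ =>
    (continuousAt_inv_of_det_ne_zero (hψinv θ).ne_zero).comp hψc.continuousAt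
  have hlim := tendstoUniformly_gaussLik_atTop
    (A := fun θ => (ψ θ)⁻¹ * Sg θ * (ψ θ)⁻¹ᵀ) (a := fun θ => (ψ θ)⁻¹ *ᵥ g θ)
    ((hψinv_cont.matrix_mul hSgc).matrix_mul hψinv_cont.matrix_transpose)
    (fun θ => (hSgPD θ).mul_mul_transpose_of_isUnit_det (isUnit_nonsing_inv_det _ (hψinv θ)))
    (hψinv_cont.matrix_mulVec hgc) hC w
  simp only [← hu, ← hΛ, gaussLik_inv_congr (hψinv _) (hSgPD _).det_pos.le] at hlim
  simpa only [gaussLik, mul_assoc] using hlim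

/-- Uniform-convergence step in the proof of the limit-of-Bayes theorem (Appendix C of
Andrews–Mikusheva): on a compact set `Θ0`, with continuous `Σ`, `ψ`, `g`, the
proportional-prior integrated likelihoods `ℓ_λ` converge uniformly, as `λ → ∞`, to the
quasi-likelihood `ℓ_∞`. -/
theorem stmt_6 {Θ0 : Type*} [TopologicalSpace Θ0] [CompactSpace Θ0]
    (k : ℕ) (hk : 1 ≤ k)
    (Sg : Θ0 → Matrix (Fin k) (Fin k) ℝ) (hSgc : Continuous Sg)
    (hSgPD : ∀ θ, (Sg θ).PosDef)
    (ψ : Θ0 → Matrix (Fin k) (Fin k) ℝ) (hψc : Continuous ψ)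
    (hψinv : ∀ θ, IsUnit (ψ θ).det)
    (C : Matrix (Fin k) (Fin k) ℝ) (hC : C.PosDef)
    (g : Θ0 → Fin k → ℝ) (hgc : Continuous g) (w : Fin k → ℝ)
    (u : ℝ → Θ0 → Fin k → ℝ) (Λ : ℝ → Θ0 → Matrix (Fin k) (Fin k) ℝ)
    (hu : ∀ l θ, u l θ = (l / (1 + l)) • (ψ θ)⁻¹.mulVec (g θ) + (1 / (1 + l)) • w)
    (hΛ : ∀ l θ, Λ l θ = (l / (1 + l)) • ((ψ θ)⁻¹ * Sg θ * ((ψ θ)⁻¹)ᵀ) + (1 / (1 + l)) • C) :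
    TendstoUniformly
      (fun (l : ℝ) (θ : Θ0) =>
        (Λ l θ).det ^ (-(1 / 2) : ℝ) *
          Real.exp (-(1 / 2) * (u l θ ⬝ᵥ (Λ l θ)⁻¹.mulVec (u l θ))))
      (fun θ : Θ0 =>
        |(ψ θ).det| * (Sg θ).det ^ (-(1 / 2) : ℝ) *
          Real.exp (-(1 / 2) * (g θ ⬝ᵥ (Sg θ)⁻¹.mulVec (g θ))))
      atTop :=
  stmt_6_general k Sg hSgc hSgPD ψ hψc hψinv C hC g hgc w u Λ hu hΛ
end

section
/- Let B be a nonempty compact topological space and k, p ≥ 1. Let Φ : B → ℝ^p → ℝ^k satisfy Φ(β)(0) = 0 for all β, let ∇ : B → (real k×p matrices) be continuous, and assume uniform differentiability at 0: for every ε' > 0 there exists η > 0 such that ‖Φ(β)(γ) − ∇(β)·γ‖ ≤ ε'·‖γ‖ whenever ‖γ‖ ≤ η and β ∈ B. Let W : B → (real k×k matrices) be continuous with W(β) symmetric positive definite for every β, and assume J(β) = ∇(β)ᵀ W(β) ∇(β) is positive definite for every β ∈ B. Then there exist constants C1 > 0, C2 > 0, and ε > 0 such that for all β ∈ B and all γ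 ∈ ℝ^p with ‖γ‖ < ε: C1·‖γ‖² ≤ Φ(β)(γ)ᵀ W(β) Φ(β)(γ) ≤ C2·‖γ‖². -/
/-!
Positive definiteness of `J β = ∇βᵀ W β ∇β`, continuity in `β` and compactness of `B × S^{p-1}`
give one `a > 0` with `a ‖γ‖² ≤ (∇β γ)ᵀ W β (∇β γ)` for all `β`, and `W`, `∇` are uniformly
bounded in operator norm, say by `w` and `M`. Since `Φ β γ` lies within `δ ‖γ‖` of `∇β γ`, the
quadratic form `x ↦ xᵀ W β x` moves by at most `w (2M + δ) δ ‖γ‖²` in between, which is at most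
`a ‖γ‖² / 2` once `δ` is small; uniform differentiability supplies the radius for that `δ`.
-/

open Matrix Filter Topology

section Coercivity

variable {n : Type*} [Fintype n]

lemma dotProduct_mulVec_smul_self (A : Matrix n n ℝ) (c : ℝ) (x : EuclideanSpace ℝ n) :
    (c • x) ⬝ᵥ A *ᵥ (c • x) = c ^ 2 * (x ⬝ᵥ A *ᵥ x) := by
  simp only [WithLp.ofLp_smul, mulVec_smul, smul_dotProduct, dotProduct_smul, smul_eq_mul]
  ring

theorem exists_pos_mul_norm_sq_le_dotProduct_mulVec {B : Type*} [TopologicalSpace B]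
    [CompactSpace B] {J : B → Matrix n n ℝ} (hJ : Continuous J) (hpos : ∀ β, (J β).PosDef) :
    ∃ a > 0, ∀ β (x : EuclideanSpace ℝ n), a * ‖x‖ ^ 2 ≤ x ⬝ᵥ J β *ᵥ x := by
  set S := (Set.univ : Set B) ×ˢ Metric.sphere (0 : EuclideanSpace ℝ n) 1
  have hcont : Continuous fun q : B × EuclideanSpace ℝ n => q.2 ⬝ᵥ J q.1 *ᵥ q.2 := by fun_prop
  have hposS : ∀ q ∈ S, 0 < q.2 ⬝ᵥ J q.1 *ᵥ q.2 := fun q hq => by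
    have hq0 : q.2 ≠ 0 := ne_zero_of_mem_unit_sphere ⟨q.2, hq.2⟩
    simpa using (hpos q.1).dotProduct_mulVec_pos (by simpa using hq0)
  obtain ⟨a, ha, hle⟩ :=
    (isCompact_univ.prod (isCompact_sphere 0 1)).exists_forall_le' hcont.continuousOn hposS
  refine ⟨a, ha, fun β x => ?_⟩
  rcases eq_or_ne x 0 with rfl | hx
  · simp
  have hunit : a ≤ (‖x‖⁻¹ • x) ⬝ᵥ J β *ᵥ (‖x‖⁻¹ • x) :=
    hle (β, _) ⟨trivial, by simpa using norm_smul_inv_norm (𝕜 := ℝ) hx⟩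
  rw [dotProduct_mulVec_smul_self] at hunit
  have hx' : 0 < ‖x‖ := norm_pos_iff.2 hx
  calc a * ‖x‖ ^ 2 ≤ (‖x‖⁻¹ ^ 2 * (x ⬝ᵥ J β *ᵥ x)) * ‖x‖ ^ 2 := by gcongr
    _ = x ⬝ᵥ J β *ᵥ x := by field_simp

end Coercivity

lemma dotProduct_transpose_mul_mul_mulVec {m p R : Type*} [Fintype m] [Fintype p]
    [CommSemiring R] (D : Matrix m p R) (W : Matrix m m R) (v : p → R) :
    v ⬝ᵥ (Dᵀ * W * D) *ᵥ v = D *ᵥ v ⬝ᵥ W *ᵥ (D *ᵥ v) := by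
  rw [← mulVec_mulVec, ← mulVec_mulVec, dotProduct_mulVec v, vecMul_transpose, dotProduct_mulVec]

section L2OpNorm

open scoped Matrix.Norms.L2Operator

variable {m n p : Type*} [Fintype m] [Fintype n] [Fintype p] [DecidableEq n] [DecidableEq p]

lemma norm_toLp_mulVec_le (A : Matrix m n ℝ) (x : EuclideanSpace ℝ n) :
    ‖WithLp.toLp 2 (A *ᵥ x)‖ ≤ ‖A‖ * ‖x‖ :=
  A.l2_opNorm_mulVec x

lemma abs_dotProduct_mulVec_le (A : Matrix m n ℝ) (x : EuclideanSpace ℝ m)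
    (y : EuclideanSpace ℝ n) : |x ⬝ᵥ A *ᵥ y| ≤ ‖A‖ * ‖x‖ * ‖y‖ := by
  have hinner : x ⬝ᵥ A *ᵥ y = inner ℝ (WithLp.toLp 2 (A *ᵥ y)) x := by
    simp [EuclideanSpace.inner_eq_star_dotProduct]
  calc |x ⬝ᵥ A *ᵥ y| ≤ ‖WithLp.toLp 2 (A *ᵥ y)‖ * ‖x‖ := hinner ▸ abs_real_inner_le_norm _ _
    _ ≤ ‖A‖ * ‖y‖ * ‖x‖ := by gcongr; exact norm_toLp_mulVec_le A y
    _ = ‖A‖ * ‖x‖ * ‖y‖ := by ring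

lemma abs_dotProduct_mulVec_sub_le (A : Matrix n n ℝ) (x y : EuclideanSpace ℝ n) :
    |x ⬝ᵥ A *ᵥ x - y ⬝ᵥ A *ᵥ y| ≤ ‖A‖ * (‖x‖ + ‖y‖) * ‖x - y‖ := by
  have hsplit : x ⬝ᵥ A *ᵥ x - y ⬝ᵥ A *ᵥ y = (x - y) ⬝ᵥ A *ᵥ x + y ⬝ᵥ A *ᵥ (x - y) := by
    simp only [WithLp.ofLp_sub, mulVec_sub, sub_dotProduct, dotProduct_sub]
    ring
  calc |x ⬝ᵥ A *ᵥ x - y ⬝ᵥ A *ᵥ y|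
      ≤ ‖A‖ * ‖x - y‖ * ‖x‖ + ‖A‖ * ‖y‖ * ‖x - y‖ := by
        rw [hsplit]
        exact (abs_add_le _ _).trans
          (add_le_add (abs_dotProduct_mulVec_le ..) (abs_dotProduct_mulVec_le ..))
    _ = ‖A‖ * (‖x‖ + ‖y‖) * ‖x - y‖ := by ring

theorem dotProduct_mulVec_bounds_of_norm_sub_mulVec_le {W : Matrix n n ℝ} {D : Matrix n p ℝ}
    {x : EuclideanSpace ℝ n} {γ : EuclideanSpace ℝ p} {a w M δ : ℝ}
    (hcoer : a * ‖γ‖ ^ 2 ≤ γ ⬝ᵥ (Dᵀ * W * D) *ᵥ γ) (hW : ‖W‖ ≤ w) (hD : ‖D‖ ≤ M)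
    (hx : ‖x - WithLp.toLp 2 (D *ᵥ γ)‖ ≤ δ * ‖γ‖)
    (hsmall : w * (2 * M + δ) * δ ≤ a / 2) :
    a / 2 * ‖γ‖ ^ 2 ≤ x ⬝ᵥ W *ᵥ x ∧ x ⬝ᵥ W *ᵥ x ≤ (w * M ^ 2 + a / 2) * ‖γ‖ ^ 2 := by
  set y := WithLp.toLp 2 (D *ᵥ γ)
  have hw : 0 ≤ w := (norm_nonneg W).trans hW
  have hy : ‖y‖ ≤ M * ‖γ‖ := (norm_toLp_mulVec_le D γ).trans (by gcongr)
  have hxy : ‖x‖ + ‖y‖ ≤ (2 * M + δ) * ‖γ‖ := by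
    linarith [norm_le_norm_add_norm_sub' x y]
  have hxy₀ : 0 ≤ (2 * M + δ) * ‖γ‖ := (by positivity : 0 ≤ ‖x‖ + ‖y‖).trans hxy
  have hqy : y ⬝ᵥ W *ᵥ y = γ ⬝ᵥ (Dᵀ * W * D) *ᵥ γ :=
    (dotProduct_transpose_mul_mul_mulVec D W γ).symm
  have hqy_le : y ⬝ᵥ W *ᵥ y ≤ w * M ^ 2 * ‖γ‖ ^ 2 :=
    calc y ⬝ᵥ W *ᵥ y ≤ ‖W‖ * ‖y‖ * ‖y‖ := (le_abs_self _).trans (abs_dotProduct_mulVec_le W y y)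
      _ = ‖W‖ * ‖y‖ ^ 2 := by ring
      _ ≤ w * (M * ‖γ‖) ^ 2 := by gcongr
      _ = w * M ^ 2 * ‖γ‖ ^ 2 := by ring
  have hdiff : |x ⬝ᵥ W *ᵥ x - y ⬝ᵥ W *ᵥ y| ≤ a / 2 * ‖γ‖ ^ 2 :=
    calc |x ⬝ᵥ W *ᵥ x - y ⬝ᵥ W *ᵥ y| ≤ ‖W‖ * (‖x‖ + ‖y‖) * ‖x - y‖ :=
          abs_dotProduct_mulVec_sub_le W x y
      _ ≤ w * ((2 * M + δ) * ‖γ‖) * (δ * ‖γ‖) :=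
          mul_le_mul (mul_le_mul hW hxy (by positivity) hw) hx (norm_nonneg _)
            (mul_nonneg hw hxy₀)
      _ = w * (2 * M + δ) * δ * ‖γ‖ ^ 2 := by ring
      _ ≤ a / 2 * ‖γ‖ ^ 2 := by gcongr
  constructor <;> linarith [abs_le.1 hdiff]

end L2OpNorm

open scoped Matrix.Norms.L2Operator in
theorem stmt_12_general {B : Type*} [TopologicalSpace B] [CompactSpace B]
    (k p : ℕ)
    (Φ : B → EuclideanSpace ℝ (Fin p) → EuclideanSpace ℝ (Fin k))
    (Dl : B → Matrix (Fin k) (Fin p) ℝ) (hDlc : Continuous Dl)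
    (hdiff : ∀ ε' > (0 : ℝ), ∃ η > (0 : ℝ), ∀ β (γ : EuclideanSpace ℝ (Fin p)),
      ‖γ‖ ≤ η →
        ‖Φ β γ - (WithLp.equiv 2 (Fin k → ℝ)).symm ((Dl β).mulVec γ)‖ ≤ ε' * ‖γ‖)
    (W : B → Matrix (Fin k) (Fin k) ℝ) (hWc : Continuous W)
    (hJPD : ∀ β, ((Dl β)ᵀ * W β * Dl β).PosDef) :
    ∃ C1 > (0 : ℝ), ∃ C2 > (0 : ℝ), ∃ ε > (0 : ℝ),
      ∀ β (γ : EuclideanSpace ℝ (Fin p)), ‖γ‖ < ε →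
        C1 * ‖γ‖ ^ 2 ≤ Φ β γ ⬝ᵥ (W β).mulVec (Φ β γ) ∧
          Φ β γ ⬝ᵥ (W β).mulVec (Φ β γ) ≤ C2 * ‖γ‖ ^ 2 := by
  obtain ⟨a, ha, hcoer⟩ := exists_pos_mul_norm_sq_le_dotProduct_mulVec
    ((hDlc.matrix_transpose.matrix_mul hWc).matrix_mul hDlc) hJPD
  obtain ⟨w, hw, hWw⟩ := (isCompact_range hWc).isBounded.exists_pos_norm_le
  obtain ⟨M, -, hDM⟩ := (isCompact_range hDlc).isBounded.exists_pos_norm_le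
  obtain ⟨δ, hsmall, hδ⟩ : ∃ δ, w * (2 * M + δ) * δ ≤ a / 2 ∧ 0 < δ := by
    have hlim : Tendsto (fun δ => w * (2 * M + δ) * δ) (𝓝[>] 0) (𝓝 0) :=
      tendsto_nhdsWithin_of_tendsto_nhds <| by
        simpa using (by fun_prop : Continuous fun δ : ℝ => w * (2 * M + δ) * δ).tendsto 0
    exact ((hlim.eventually (ge_mem_nhds (half_pos ha))).and self_mem_nhdsWithin).exists
  obtain ⟨η, hη, hΦ⟩ := hdiff δ hδ
  refine ⟨a / 2, by positivity, w * M ^ 2 + a / 2, by positivity, η, hη, fun β γ hγ => ?_⟩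
  exact dotProduct_mulVec_bounds_of_norm_sub_mulVec_le (hcoer β γ) (hWw _ ⟨β, rfl⟩)
    (hDM _ ⟨β, rfl⟩) (hΦ β γ hγ.le) hsmall

/-- Uniform quadratic bounds for the population GMM objective near the identified set
(proof of Theorem 5 of Andrews–Mikusheva): uniform differentiability of `Φ(β,·)` at
`γ = 0` with full-rank Jacobians over the compact set `B` gives constants `C1, C2, ε > 0`
with `C1‖γ‖² ≤ Φ(β,γ)ᵀW(β)Φ(β,γ) ≤ C2‖γ‖²` for all `β` and `‖γ‖ < ε`. -/
theorem stmt_12 {B : Type*} [TopologicalSpace B] [CompactSpace B] [Nonempty B]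
    (k p : ℕ) (hk : 1 ≤ k) (hp : 1 ≤ p)
    (Φ : B → EuclideanSpace ℝ (Fin p) → EuclideanSpace ℝ (Fin k))
    (hΦ0 : ∀ β, Φ β 0 = 0)
    (Dl : B → Matrix (Fin k) (Fin p) ℝ) (hDlc : Continuous Dl)
    (hdiff : ∀ ε' > (0 : ℝ), ∃ η > (0 : ℝ), ∀ β (γ : EuclideanSpace ℝ (Fin p)),
      ‖γ‖ ≤ η →
        ‖Φ β γ - (WithLp.equiv 2 (Fin k → ℝ)).symm ((Dl β).mulVec γ)‖ ≤ ε' * ‖γ‖)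
    (W : B → Matrix (Fin k) (Fin k) ℝ) (hWc : Continuous W)
    (hWPD : ∀ β, (W β).PosDef)
    (hJPD : ∀ β, ((Dl β)ᵀ * W β * Dl β).PosDef) :
    ∃ C1 > (0 : ℝ), ∃ C2 > (0 : ℝ), ∃ ε > (0 : ℝ),
      ∀ β (γ : EuclideanSpace ℝ (Fin p)), ‖γ‖ < ε →
        C1 * ‖γ‖ ^ 2 ≤ Φ β γ ⬝ᵥ (W β).mulVec (Φ β γ) ∧
          Φ β γ ⬝ᵥ (W β).mulVec (Φ β γ) ≤ C2 * ‖γ‖ ^ 2 :=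
  stmt_12_general k p Φ Dl hDlc hdiff W hWc hJPD
end

section
/- Let r, k ≥ 1 and let Σ be an invertible real matrix indexed by (Fin r × Fin k) × (Fin r × Fin k) (an rk × rk matrix partitioned into r×r blocks of size k×k). Then there exists a real k × rk matrix A (indexed by Fin k × (Fin r × Fin k)) such that for every j ∈ Fin r, the k×k block of A·Σ consisting of the columns with first index j is invertible. -/
open Matrix

/-- Existence claim in the finite-Θ special case of Lemma 1 of Andrews–Mikusheva:
for an invertible `rk × rk` matrix `Σ` (partitioned into `r` blocks of `k` columns),
there exists a `k × rk` matrix `A` such that every `k × k` block of `A·Σ` is invertible. -/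
theorem stmt_16 (r k : ℕ) (hr : 1 ≤ r) (hk : 1 ≤ k)
    (Sg : Matrix (Fin r × Fin k) (Fin r × Fin k) ℝ) (hSg : IsUnit Sg.det) :
    ∃ A : Matrix (Fin k) (Fin r × Fin k) ℝ,
      ∀ j : Fin r, IsUnit (Matrix.of fun i i' : Fin k => (A * Sg) i (j, i')).det := by
  set C : Matrix (Fin k) (Fin r × Fin k) ℝ :=
    Matrix.of fun i p => if i = p.2 then (1 : ℝ) else 0 with hC
  refine ⟨C * Sg⁻¹, fun j => ?_⟩
  have hAS : C * Sg⁻¹ * Sg = C := by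
    rw [Matrix.mul_assoc, Matrix.nonsing_inv_mul Sg hSg, Matrix.mul_one]
  have hblock : (Matrix.of fun i i' : Fin k => (C * Sg⁻¹ * Sg) i (j, i')) =
      (1 : Matrix (Fin k) (Fin k) ℝ) := by
    rw [hAS]
    ext i i'
    simp [hC, Matrix.one_apply]
  rw [hblock]
  simp
end
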